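/- Suppose in addition that ε < (1−γ)/(2nΓγ), Σ_{k=0}^∞ α_k = ∞ and Σ_{k=0}^∞ α_k² < ∞. Then Σ_{k=0}^∞ α_k (f(z̄^k) − f*) < ∞. -/

import Mathlib

/-!
Stack `(x, y)` into one family `u_k` indexed by `Fin n ⊕ Fin n`: the iteration becomes
`u_{k+1} = M u_k + (g^k, 0)`, and since the columns of `M` sum to one, the average `z̄` moves by
`(1/n) Σ_i g_i^k`. Unrolling the recursion against `‖M^k - L‖ ≤ Γ γ^k` bounds both the
disagreement `‖x_i^k - z̄^k‖` and `‖y_i^{k+1}‖ / γ` by `Q_k = Γ Σ_{s<k} γ^{k-1-s} g_s`.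
Each `g_i^k` is a projection error minus `α_k d_i^k`, so `g_{k+1} ≤ ε n γ Q_k + 2 n B α_{k+1}`;
as `Q_{k+1} = γ Q_k + Γ g_k` and `ε n Γ γ < (1 - γ) / 2`, the sequences `Q` and `g` are
square-summable along with `α`. The subgradient estimate for `‖z̄^{k+1} - x*‖²` then has errors
that are products of `Q`, `g`, `α`, hence summable, and the weighted sum telescopes.
-/

open Finset Filter Matrix
open scoped RealInnerProductSpace

section ConvexAnalysis

variable {E : Type*} [NormedAddCommGroup E] [InnerProductSpace ℝ E]

theorem ConvexOn.exists_subgradient [CompleteSpace E] {φ : E → ℝ} (hφ : ConvexOn ℝ Set.univ φ)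
    (hcont : Continuous φ) (u : E) : ∃ s, ∀ v, φ u + ⟪s, v - u⟫ ≤ φ v := by
  have hconv : Convex ℝ {q : E × ℝ | φ q.1 < q.2} := by
    simpa using hφ.convex_strict_epigraph
  have hopen : IsOpen {q : E × ℝ | φ q.1 < q.2} :=
    isOpen_lt (hcont.comp continuous_fst) continuous_snd
  obtain ⟨L, hL⟩ := geometric_hahn_banach_open_point hconv hopen (x := (u, φ u)) (lt_irrefl (φ u))
  set ψ : E →L[ℝ] ℝ := L.comp (ContinuousLinearMap.inl ℝ E ℝ)
  set c := L (0, 1)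
  have hL_apply (z : E) (t : ℝ) : L (z, t) = ψ z + t * c := by
    rw [show ((z, t) : E × ℝ) = (z, 0) + t • (0, 1) by simp, map_add, map_smul, smul_eq_mul]
    rfl
  have hc : 0 < -c := by
    have := hL (u, φ u + 1) (by simp)
    rw [hL_apply, hL_apply] at this
    linarith
  -- `(u, φ u)` maximises `L` on the graph of `φ`: approach the graph from the strict epigraph
  have hgraph (v : E) : ψ v + φ v * c ≤ ψ u + φ u * c := by
    refine le_of_forall_pos_lt_add fun e he => ?_
    have := hL (v, φ v + e / -c) (by simp [div_pos he hc])
    rw [hL_apply, hL_apply] at this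
    have : e / -c * c = -e := by field_simp [neg_ne_zero.mp hc.ne']
    linarith
  refine ⟨(-c)⁻¹ • (InnerProductSpace.toDual ℝ E).symm ψ, fun v => ?_⟩
  rw [real_inner_smul_left, inner_sub_right, InnerProductSpace.toDual_symm_apply,
    InnerProductSpace.toDual_symm_apply, inv_mul_eq_div, ← sub_nonneg]
  have : (ψ v - ψ u) / -c ≤ φ v - φ u := by
    rw [div_le_iff₀ hc]; linarith [hgraph v]
  linarith

theorem le_add_mul_norm_sub_of_subgradient {φ : E → ℝ} {u s : E}
    (hs : ∀ v, φ u + ⟪s, v - u⟫ ≤ φ v) {B : ℝ} (hsB : ‖s‖ ≤ B) (v : E) :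
    φ u ≤ φ v + B * ‖u - v‖ := by
  have h1 : -⟪s, v - u⟫ ≤ ‖s‖ * ‖u - v‖ := by
    rw [← inner_neg_right, neg_sub]; exact real_inner_le_norm s (u - v)
  linarith [hs v, mul_le_mul_of_nonneg_right hsB (norm_nonneg (u - v))]

theorem real_inner_le_zero_of_forall_norm_sub_le {X : Set E} (hX : Convex ℝ X) {v q : E}
    (hq : q ∈ X) (hmin : ∀ w ∈ X, ‖q - v‖ ≤ ‖w - v‖) {w : E} (hw : w ∈ X) : ⟪v - q, w - q⟫ ≤ 0 := by
  refine (norm_eq_iInf_iff_real_inner_le_zero hX hq).1 (le_antisymm ?_ ?_) w hw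
  · have : Nonempty X := ⟨⟨q, hq⟩⟩
    exact le_ciInf fun w' => by simpa only [norm_sub_rev v] using hmin w' w'.2
  · exact ciInf_le ⟨0, fun _ ⟨_, h⟩ => h ▸ norm_nonneg _⟩ (⟨q, hq⟩ : X)

theorem exists_proj_add_eq_add {X : Set E} (hX : Convex ℝ X) {P : E → E} (hPmem : ∀ v, P v ∈ X)
    (hPproj : ∀ v w, w ∈ X → ‖P v - v‖ ≤ ‖w - v‖) {q : E} (hq : q ∈ X) (r : E) :
    ∃ e, P (q + r) = q + r + e ∧ (∀ w ∈ X, ⟪e, P (q + r) - w⟫ ≤ 0) ∧ ‖e‖ ≤ ‖r‖ := by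
  refine ⟨P (q + r) - (q + r), by abel, fun w hw => ?_, ?_⟩
  · have := real_inner_le_zero_of_forall_norm_sub_le hX (hPmem (q + r)) (hPproj (q + r)) hw
    rwa [← neg_sub (q + r), ← neg_sub w, inner_neg_neg]
  · simpa using hPproj (q + r) q hq

theorem inner_sub_le_of_projected_subgradient_step {φ : E → ℝ} {z x x' xs d e : E} {α B : ℝ}
    (hα : 0 ≤ α) (hsub : ∀ v, φ x + ⟪d, v - x⟫ ≤ φ v) (hd : ‖d‖ ≤ B)
    (hlip : φ z ≤ φ x + B * ‖z - x‖) (he : ⟪e, x' - xs⟫ ≤ 0) :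
    ⟪z - xs, e - α • d⟫ ≤ ‖z - x'‖ * ‖e‖ - α * (φ z - φ xs) + 2 * α * B * ‖z - x‖ := by
  have hze : ⟪z - xs, e⟫ ≤ ‖z - x'‖ * ‖e‖ := by
    rw [show z - xs = (z - x') + (x' - xs) by abel, inner_add_left]
    linarith [real_inner_le_norm (z - x') e, real_inner_comm e (x' - xs)]
  have hzd : φ z - φ xs - 2 * B * ‖z - x‖ ≤ ⟪z - xs, d⟫ := by
    have h1 : -(‖z - x‖ * ‖d‖) ≤ ⟪z - x, d⟫ :=
      (neg_le_neg (abs_real_inner_le_norm _ _)).trans (neg_abs_le _)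
    have h2 : φ x - φ xs ≤ ⟪x - xs, d⟫ := by
      have := hsub xs
      rw [real_inner_comm, ← neg_sub x xs, inner_neg_left] at this
      linarith
    rw [show z - xs = (z - x) + (x - xs) by abel, inner_add_left]
    linarith [mul_le_mul_of_nonneg_left hd (norm_nonneg (z - x))]
  rw [inner_sub_right, real_inner_smul_right]
  linarith [mul_le_mul_of_nonneg_left hzd hα]

theorem averaged_step_descent {ι : Type*} [Fintype ι] {φ : ι → E → ℝ} {z z' xs : E}
    {x x' d e : ι → E} {α B a b c w : ℝ} (hw : 0 ≤ w) (hα : 0 ≤ α)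
    (hz' : z' = z + w • ∑ i, (e i - α • d i))
    (hsub : ∀ i v, φ i (x i) + ⟪d i, v - x i⟫ ≤ φ i v) (hd : ∀ i, ‖d i‖ ≤ B)
    (hlip : ∀ i, φ i z ≤ φ i (x i) + B * ‖z - x i‖) (he : ∀ i, ⟪e i, x' i - xs⟫ ≤ 0)
    (hx : ∀ i, ‖z - x i‖ ≤ a) (hx' : ∀ i, ‖z - x' i‖ ≤ b) (hec : ∀ i, ‖e i‖ ≤ c) :
    2 * w * α * ∑ i, (φ i z - φ i xs)
      ≤ ‖z - xs‖ ^ 2 - ‖z' - xs‖ ^ 2 + ‖z' - z‖ ^ 2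
        + 2 * w * (Fintype.card ι * (b * c + 2 * α * B * a)) := by
  have hagent (i : ι) : ⟪z - xs, e i - α • d i⟫ ≤ b * c - α * (φ i z - φ i xs) + 2 * α * B * a := by
    have hB : 0 ≤ B := (norm_nonneg _).trans (hd i)
    have h1 : ‖z - x' i‖ * ‖e i‖ ≤ b * c :=
      mul_le_mul (hx' i) (hec i) (norm_nonneg _) ((norm_nonneg _).trans (hx' i))
    have h2 : 2 * α * B * ‖z - x i‖ ≤ 2 * α * B * a :=
      mul_le_mul_of_nonneg_left (hx i) (by positivity)
    linarith [inner_sub_le_of_projected_subgradient_step hα (hsub i) (hd i) (hlip i) (he i)]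
  have hsum : ⟪z - xs, z' - z⟫ ≤ w * (Fintype.card ι * (b * c + 2 * α * B * a)
      - α * ∑ i, (φ i z - φ i xs)) := by
    rw [hz', add_sub_cancel_left, real_inner_smul_right, inner_sum]
    refine mul_le_mul_of_nonneg_left ?_ hw
    refine (sum_le_sum fun i _ => hagent i).trans_eq ?_
    rw [sum_add_distrib, sum_sub_distrib, sum_const, sum_const, ← mul_sum, card_univ,
      nsmul_eq_mul, nsmul_eq_mul]
    ring
  have hexp : ‖z' - xs‖ ^ 2 = ‖z - xs‖ ^ 2 + 2 * ⟪z - xs, z' - z⟫ + ‖z' - z‖ ^ 2 := by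
    rw [← norm_add_sq_real, add_comm (z - xs), sub_add_sub_cancel]
  linarith

end ConvexAnalysis

namespace Matrix

variable {E : Type*} [AddCommGroup E] [Module ℝ E] {ι κ μ : Type*} [Fintype ι]

def smulVec (M : Matrix κ ι ℝ) (v : ι → E) : κ → E := fun r => ∑ j, M r j • v j

theorem one_smulVec [DecidableEq ι] (v : ι → E) : (1 : Matrix ι ι ℝ).smulVec v = v := by
  ext r; simp [smulVec, one_apply]

theorem mul_smulVec [Fintype κ] (M : Matrix μ κ ℝ) (N : Matrix κ ι ℝ) (v : ι → E) :
    (M * N).smulVec v = M.smulVec (N.smulVec v) := by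
  ext r
  simp only [smulVec, mul_apply, Finset.sum_smul, Finset.smul_sum, mul_smul]
  exact Finset.sum_comm

theorem sub_smulVec (M N : Matrix κ ι ℝ) (v : ι → E) :
    (M - N).smulVec v = M.smulVec v - N.smulVec v := by
  ext r; simp [smulVec, sub_smul]

theorem smulVec_sum {α : Type*} (M : Matrix κ ι ℝ) (t : Finset α) (v : α → ι → E) :
    M.smulVec (∑ s ∈ t, v s) = ∑ s ∈ t, M.smulVec (v s) := by
  ext r
  simp only [smulVec, Finset.sum_apply, Finset.smul_sum]
  exact Finset.sum_comm

theorem sum_smulVec_of_sum_col_eq_one {M : Matrix ι ι ℝ} (hM : ∀ j, ∑ r, M r j = 1)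
    (v : ι → E) : ∑ r, M.smulVec v r = ∑ j, v j := by
  simp only [smulVec]
  rw [Finset.sum_comm]
  simp [← Finset.sum_smul, hM]

section Recursion

variable {M : Matrix ι ι ℝ} {u G : ℕ → ι → E}

theorem eq_sum_pow_smulVec_of_succ [DecidableEq ι] (h0 : u 0 = 0)
    (hstep : ∀ k, u (k + 1) = M.smulVec (u k) + G k) (k : ℕ) :
    u k = ∑ s ∈ range k, (M ^ (k - 1 - s)).smulVec (G s) := by
  induction k with
  | zero => simpa using h0
  | succ k ih =>
    rw [hstep, ih, smulVec_sum, sum_range_succ, Nat.add_sub_cancel, Nat.sub_self, pow_zero,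
      one_smulVec]
    congr 1
    refine sum_congr rfl fun s hs => ?_
    rw [← mul_smulVec, ← pow_succ', show k - 1 - s + 1 = k - s by
      have := mem_range.1 hs; omega]

theorem sum_eq_sum_range_of_succ (hM : ∀ j, ∑ r, M r j = 1) (h0 : u 0 = 0)
    (hstep : ∀ k, u (k + 1) = M.smulVec (u k) + G k) (k : ℕ) :
    ∑ r, u k r = ∑ s ∈ range k, ∑ r, G s r := by
  induction k with
  | zero => simp [h0]
  | succ k ih =>
    simp only [hstep, Pi.add_apply, sum_add_distrib, sum_smulVec_of_sum_col_eq_one hM, ih,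
      sum_range_succ]

end Recursion

end Matrix

theorem Matrix.norm_pow_smulVec_sub_le {E ι : Type*} [NormedAddCommGroup E] [NormedSpace ℝ E]
    [Fintype ι] [DecidableEq ι] {M L : Matrix ι ι ℝ} {u G : ℕ → ι → E} {Γ γ : ℝ}
    (hM : ∀ m r, ∑ l, |(M ^ m - L) r l| ≤ Γ * γ ^ m) (h0 : u 0 = 0)
    (hstep : ∀ k, u (k + 1) = M.smulVec (u k) + G k) (a k : ℕ) (r : ι) :
    ‖(M ^ a).smulVec (u k) r - ∑ s ∈ range k, L.smulVec (G s) r‖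
      ≤ Γ * ∑ s ∈ range k, γ ^ (a + (k - 1 - s)) * ∑ l, ‖G s l‖ := by
  rw [eq_sum_pow_smulVec_of_succ h0 hstep, smulVec_sum, Finset.sum_apply, ← sum_sub_distrib,
    mul_sum]
  refine (norm_sum_le _ _).trans (sum_le_sum fun s _ => ?_)
  rw [← mul_smulVec, ← pow_add, ← Pi.sub_apply, ← sub_smulVec, smulVec, ← mul_assoc]
  refine (norm_sum_le _ _).trans ?_
  rw [mul_sum]
  refine sum_le_sum fun l _ => ?_
  rw [norm_smul, Real.norm_eq_abs]
  gcongr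
  exact (single_le_sum (f := fun l => |(M ^ (a + (k - 1 - s)) - L) r l|)
    (fun _ _ => abs_nonneg _) (mem_univ l)).trans (hM _ r)

def consensusBound (Γ γ : ℝ) (g : ℕ → ℝ) (k : ℕ) : ℝ := Γ * ∑ s ∈ range k, γ ^ (k - 1 - s) * g s

theorem consensusBound_succ (Γ γ : ℝ) (g : ℕ → ℝ) (k : ℕ) :
    consensusBound Γ γ g (k + 1) = γ * consensusBound Γ γ g k + Γ * g k := by
  simp only [consensusBound, sum_range_succ, Nat.add_sub_cancel, Nat.sub_self, pow_zero, one_mul,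
    mul_add, mul_sum]
  congr 1
  refine sum_congr rfl fun s hs => ?_
  rw [show k - s = k - 1 - s + 1 by have := mem_range.1 hs; omega, pow_succ]
  ring

theorem consensusBound_nonneg {Γ γ : ℝ} {g : ℕ → ℝ} (hΓ : 0 ≤ Γ) (hγ : 0 ≤ γ)
    (hg : ∀ k, 0 ≤ g k) (k : ℕ) : 0 ≤ consensusBound Γ γ g k :=
  mul_nonneg hΓ (sum_nonneg fun s _ => mul_nonneg (pow_nonneg hγ _) (hg s))

section SquareSummable

variable {a b v w : ℕ → ℝ}

theorem summable_mul_of_summable_sq (ha0 : ∀ k, 0 ≤ a k) (hb0 : ∀ k, 0 ≤ b k)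
    (ha : Summable fun k => a k ^ 2) (hb : Summable fun k => b k ^ 2) :
    Summable fun k => a k * b k :=
  Real.summable_mul_of_Lp_Lq_of_nonneg .two_two ha0 hb0 (by simpa using ha) (by simpa using hb)

theorem summable_add_sq (ha0 : ∀ k, 0 ≤ a k) (hb0 : ∀ k, 0 ≤ b k)
    (ha : Summable fun k => a k ^ 2) (hb : Summable fun k => b k ^ 2) :
    Summable fun k => (a k + b k) ^ 2 := by
  simp only [add_sq, mul_assoc]
  exact (ha.add ((summable_mul_of_summable_sq ha0 hb0 ha hb).mul_left 2)).add hb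

theorem summable_sq_of_le_mul_add {β : ℝ} (hv : ∀ k, 0 ≤ v k) (hβ0 : 0 ≤ β) (hβ1 : β < 1)
    (hrec : ∀ k, v (k + 1) ≤ β * v k + w k) (hw : Summable fun k => w k ^ 2) :
    Summable fun k => v k ^ 2 := by
  have h1β : 0 < 1 - β := by linarith
  set T := ∑' k, w k ^ 2
  -- convexity of the square with weights `β` and `1 - β`
  have hsq (k : ℕ) : v (k + 1) ^ 2 ≤ β * v k ^ 2 + w k ^ 2 / (1 - β) := by
    have hle : v (k + 1) ^ 2 ≤ (β * v k + w k) ^ 2 := pow_le_pow_left₀ (hv _) (hrec k) 2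
    have : (β * v k + w k) ^ 2 ≤ β * v k ^ 2 + w k ^ 2 / (1 - β) := by
      rw [← sub_nonneg]
      have : β * v k ^ 2 + w k ^ 2 / (1 - β) - (β * v k + w k) ^ 2
          = β * ((1 - β) * v k - w k) ^ 2 / (1 - β) := by
        field_simp
        ring
      rw [this]
      exact div_nonneg (mul_nonneg hβ0 (sq_nonneg _)) h1β.le
    linarith
  refine summable_of_sum_range_le (c := (v 0 ^ 2 + T / (1 - β)) / (1 - β)) (fun _ => sq_nonneg _)
    fun K => ?_
  have hmono : ∑ k ∈ range K, v k ^ 2 ≤ ∑ k ∈ range (K + 1), v k ^ 2 :=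
    sum_le_sum_of_subset_of_nonneg (range_subset_range.2 K.le_succ) fun _ _ _ => sq_nonneg _
  have hstep : ∑ k ∈ range (K + 1), v k ^ 2
      ≤ v 0 ^ 2 + β * ∑ k ∈ range K, v k ^ 2 + T / (1 - β) := by
    rw [sum_range_succ', mul_sum, add_comm]
    have : ∑ k ∈ range K, w k ^ 2 / (1 - β) ≤ T / (1 - β) := by
      rw [← sum_div]
      exact div_le_div_of_nonneg_right (hw.sum_le_tsum _ fun _ _ => sq_nonneg _) h1β.le
    have := sum_le_sum fun k (_ : k ∈ range K) => hsq k
    rw [sum_add_distrib] at this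
    linarith
  rw [le_div_iff₀ h1β]
  linarith

theorem summable_sq_of_coupled {Q g w : ℕ → ℝ} {γ Γ c : ℝ} (hQ : ∀ k, 0 ≤ Q k)
    (hg : ∀ k, 0 ≤ g k) (hw0 : ∀ k, 0 ≤ w k) (hγ0 : 0 ≤ γ) (hγ1 : γ < 1) (hΓ : 0 ≤ Γ)
    (hc : 0 ≤ c) (hΓc : Γ * c ≤ (1 - γ) / 2) (hQsucc : ∀ k, Q (k + 1) ≤ γ * Q k + Γ * g k)
    (hgsucc : ∀ k, g (k + 1) ≤ c * Q k + w (k + 1)) (hw : Summable fun k => w k ^ 2) :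
    (Summable fun k => Q k ^ 2) ∧ Summable fun k => g k ^ 2 := by
  set μ := 3 * (1 - γ) / 4 with hμ_def
  have hμ : 0 ≤ μ := by positivity
  have hw' : Summable fun k => (Γ * w (k + 1)) ^ 2 :=
    (((summable_nat_add_iff 1).2 hw).mul_left (Γ ^ 2)).congr fun k => by ring
  -- `Q (k + 1) + μ Q k` contracts by the factor `γ + μ < 1` up to the forcing term; `μ` is chosen
  -- so that `Γ c ≤ (1 - γ) / 2 ≤ (γ + μ) μ`
  have hV : Summable fun k => (Q (k + 1) + μ * Q k) ^ 2 := by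
    refine summable_sq_of_le_mul_add (β := γ + μ)
      (fun k => add_nonneg (hQ _) (mul_nonneg hμ (hQ _))) (by positivity) (by rw [hμ_def]; linarith) (fun k => ?_) hw'
    have h1 := hQsucc (k + 1)
    have h2 := mul_le_mul_of_nonneg_left (hgsucc k) hΓ
    have h3 : Γ * c * Q k ≤ (γ + μ) * μ * Q k :=
      mul_le_mul_of_nonneg_right (by rw [hμ_def]; nlinarith) (hQ k)
    linarith
  have hQ' : Summable fun k => Q k ^ 2 := by
    refine (summable_nat_add_iff 1).1 (hV.of_nonneg_of_le (fun _ => sq_nonneg _) fun k => ?_)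
    exact pow_le_pow_left₀ (hQ _) (le_add_of_nonneg_right (mul_nonneg hμ (hQ k))) 2
  refine ⟨hQ', (summable_nat_add_iff 1).1 ?_⟩
  have hcQ : Summable fun k => (c * Q k) ^ 2 := (hQ'.mul_left (c ^ 2)).congr fun k => by ring
  refine (summable_add_sq (fun k => mul_nonneg hc (hQ k)) (fun k => hw0 (k + 1)) hcQ
    ((summable_nat_add_iff 1).2 hw)).of_nonneg_of_le (fun _ => sq_nonneg _) fun k => ?_
  exact pow_le_pow_left₀ (hg _) (hgsucc k) 2

end SquareSummable

theorem sum_range_le_of_le_sub_add {a D R : ℕ → ℝ} (hD : ∀ k, 0 ≤ D k) (hR0 : ∀ k, 0 ≤ R k)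
    (hR : Summable R) (h : ∀ k, a k ≤ D k - D (k + 1) + R k) (K : ℕ) :
    ∑ k ∈ range K, a k ≤ D 0 + ∑' k, R k := by
  have hsum : ∑ k ∈ range K, a k ≤ D 0 - D K + ∑ k ∈ range K, R k := by
    rw [← sum_range_sub', ← sum_add_distrib]
    exact sum_le_sum fun k _ => h k
  linarith [hD K, hR.sum_le_tsum (range K) fun k _ => hR0 k]

def descentRemainder (ε B : ℝ) (Q g α : ℕ → ℝ) (k : ℕ) : ℝ :=
  g k ^ 2 + 2 * ((Q (k + 1) + g k) * (ε * Q k + B * α k) + 2 * B * (α k * Q k))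

theorem descentRemainder_nonneg {ε B : ℝ} {Q g α : ℕ → ℝ} (hε : 0 ≤ ε) (hB : 0 ≤ B)
    (hQ : ∀ k, 0 ≤ Q k) (hg : ∀ k, 0 ≤ g k) (hα : ∀ k, 0 ≤ α k) (k : ℕ) :
    0 ≤ descentRemainder ε B Q g α k := by
  have := hQ k; have := hQ (k + 1); have := hg k; have := hα k
  unfold descentRemainder
  positivity

theorem summable_descentRemainder {ε B : ℝ} {Q g α : ℕ → ℝ} (hε : 0 ≤ ε) (hB : 0 ≤ B)
    (hQ : ∀ k, 0 ≤ Q k) (hg : ∀ k, 0 ≤ g k) (hα : ∀ k, 0 ≤ α k)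
    (hQ2 : Summable fun k => Q k ^ 2) (hg2 : Summable fun k => g k ^ 2)
    (hα2 : Summable fun k => α k ^ 2) : Summable (descentRemainder ε B Q g α) := by
  have hεQ : Summable fun k => (ε * Q k) ^ 2 := (hQ2.mul_left (ε ^ 2)).congr fun k => by ring
  have hBα : Summable fun k => (B * α k) ^ 2 := (hα2.mul_left (B ^ 2)).congr fun k => by ring
  have hprod := summable_mul_of_summable_sq (fun k => add_nonneg (hQ (k + 1)) (hg k))
    (fun k => add_nonneg (mul_nonneg hε (hQ k)) (mul_nonneg hB (hα k)))
    (summable_add_sq (fun k => hQ (k + 1)) hg ((summable_nat_add_iff 1).2 hQ2) hg2)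
    (summable_add_sq (fun k => mul_nonneg hε (hQ k)) (fun k => mul_nonneg hB (hα k)) hεQ hBα)
  exact hg2.add ((hprod.add ((summable_mul_of_summable_sq hα hQ hα2 hQ2).mul_left
    (2 * B))).mul_left 2)

section DDPS

variable {E : Type*} [NormedAddCommGroup E] [InnerProductSpace ℝ E] {n : ℕ}

theorem ddps_sum_col_eq_one {A Bh : Matrix (Fin n) (Fin n) ℝ} (hBcol : ∀ j, ∑ i, Bh i j = 1)
    (ε : ℝ) (j : Fin n ⊕ Fin n) : ∑ r, fromBlocks A (ε • 1) (1 - A) (Bh - ε • 1) r j = 1 := by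
  cases j <;> simp [Fintype.sum_sum_type, sum_sub_distrib, one_apply, hBcol]

theorem ddps_stack_succ {A Bh : Matrix (Fin n) (Fin n) ℝ} {ε : ℝ} {x y gv : ℕ → Fin n → E}
    (hgv : ∀ k i, gv k i = x (k + 1) i - ∑ j, A i j • x k j - ε • y k i)
    (hyupd : ∀ k i, y (k + 1) i = x k i - ∑ j, A i j • x k j + (∑ j, Bh i j • y k j) - ε • y k i)
    (k : ℕ) :
    Sum.elim (x (k + 1)) (y (k + 1))
      = (fromBlocks A (ε • 1) (1 - A) (Bh - ε • 1)).smulVec (Sum.elim (x k) (y k))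
        + Sum.elim (gv k) 0 := by
  ext (i | i) <;> simp [smulVec, Fintype.sum_sum_type, sub_smul, one_apply, sum_sub_distrib, hgv,
    hyupd]
  abel

theorem ddps_zbar_eq_sum {A Bh : Matrix (Fin n) (Fin n) ℝ} {ε : ℝ} {x y gv : ℕ → Fin n → E}
    {zbar : ℕ → E} (hx0 : ∀ i, x 0 i = 0) (hy0 : ∀ i, y 0 i = 0)
    (hgv : ∀ k i, gv k i = x (k + 1) i - ∑ j, A i j • x k j - ε • y k i)
    (hyupd : ∀ k i, y (k + 1) i = x k i - ∑ j, A i j • x k j + (∑ j, Bh i j • y k j) - ε • y k i)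
    (hBcol : ∀ j, ∑ i, Bh i j = 1)
    (hzbar : ∀ k, zbar k = (n : ℝ)⁻¹ • (∑ i, x k i + ∑ i, y k i)) (k : ℕ) :
    zbar k = (n : ℝ)⁻¹ • ∑ s ∈ range k, ∑ i, gv s i := by
  have h0 : Sum.elim (x 0) (y 0) = 0 := by ext (i | i) <;> simp [hx0, hy0]
  have := sum_eq_sum_range_of_succ (u := fun k => Sum.elim (x k) (y k))
    (G := fun k => Sum.elim (gv k) 0) (ddps_sum_col_eq_one hBcol ε) h0 (ddps_stack_succ hgv hyupd) k
  simpa [Fintype.sum_sum_type, ← hzbar] using congrArg ((n : ℝ)⁻¹ • ·) this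

theorem ddps_consensus {A Bh : Matrix (Fin n) (Fin n) ℝ} {ε Γ γ : ℝ} {x y gv : ℕ → Fin n → E}
    {g : ℕ → ℝ} {zbar : ℕ → E} (hx0 : ∀ i, x 0 i = 0) (hy0 : ∀ i, y 0 i = 0)
    (hgv : ∀ k i, gv k i = x (k + 1) i - ∑ j, A i j • x k j - ε • y k i)
    (hyupd : ∀ k i, y (k + 1) i = x k i - ∑ j, A i j • x k j + (∑ j, Bh i j • y k j) - ε • y k i)
    (hBcol : ∀ j, ∑ i, Bh i j = 1) (hg : ∀ k, g k = ∑ i, ‖gv k i‖)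
    (hzbar : ∀ k, zbar k = (n : ℝ)⁻¹ • (∑ i, x k i + ∑ i, y k i))
    (hM : ∀ (k : ℕ) (i : Fin n ⊕ Fin n),
      ∑ j, |((Matrix.fromBlocks A (ε • (1 : Matrix (Fin n) (Fin n) ℝ))
          ((1 : Matrix (Fin n) (Fin n) ℝ) - A) (Bh - ε • (1 : Matrix (Fin n) (Fin n) ℝ))) ^ k
        - Matrix.fromBlocks (Matrix.of fun _ _ => (n : ℝ)⁻¹)
            (Matrix.of fun _ _ => (n : ℝ)⁻¹) 0 0 :
          Matrix (Fin n ⊕ Fin n) (Fin n ⊕ Fin n) ℝ) i j| ≤ Γ * γ ^ k)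
    (k : ℕ) (i : Fin n) :
    ‖x k i - zbar k‖ ≤ consensusBound Γ γ g k ∧ ‖y (k + 1) i‖ ≤ γ * consensusBound Γ γ g k := by
  have h0 : Sum.elim (x 0) (y 0) = 0 := by ext (i | i) <;> simp [hx0, hy0]
  have hstep := ddps_stack_succ hgv hyupd
  have hdev := norm_pow_smulVec_sub_le (u := fun k => Sum.elim (x k) (y k))
    (G := fun k => Sum.elim (gv k) 0) hM h0 hstep
  have hG (s : ℕ) : ∑ l, ‖Sum.elim (gv s) (0 : Fin n → E) l‖ = g s := by
    simp [Fintype.sum_sum_type, hg]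
  constructor
  · have := hdev 0 k (.inl i)
    rw [pow_zero, one_smulVec] at this
    simpa [smulVec, Fintype.sum_sum_type, ← smul_sum, ← ddps_zbar_eq_sum hx0 hy0 hgv hyupd hBcol
      hzbar, hG, consensusBound] using this
  · have := hdev 1 k (.inr i)
    rw [pow_one, eq_sub_of_add_eq (hstep k).symm] at this
    simpa [smulVec, Fintype.sum_sum_type, hG, consensusBound, pow_add, mul_sum, mul_assoc,
      mul_left_comm γ] using this

theorem ddps_zbar_succ {A Bh : Matrix (Fin n) (Fin n) ℝ} {ε : ℝ} {x y gv : ℕ → Fin n → E}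
    {zbar : ℕ → E} (hx0 : ∀ i, x 0 i = 0) (hy0 : ∀ i, y 0 i = 0)
    (hgv : ∀ k i, gv k i = x (k + 1) i - ∑ j, A i j • x k j - ε • y k i)
    (hyupd : ∀ k i, y (k + 1) i = x k i - ∑ j, A i j • x k j + (∑ j, Bh i j • y k j) - ε • y k i)
    (hBcol : ∀ j, ∑ i, Bh i j = 1)
    (hzbar : ∀ k, zbar k = (n : ℝ)⁻¹ • (∑ i, x k i + ∑ i, y k i)) (k : ℕ) :
    zbar (k + 1) = zbar k + (n : ℝ)⁻¹ • ∑ i, gv k i := by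
  simp only [ddps_zbar_eq_sum hx0 hy0 hgv hyupd hBcol hzbar, sum_range_succ, smul_add]

theorem ddps_exists_proj_error {X : Set E} (hX : Convex ℝ X) (hX0 : (0 : E) ∈ X) {P : E → E}
    (hPmem : ∀ v, P v ∈ X) (hPproj : ∀ v w, w ∈ X → ‖P v - v‖ ≤ ‖w - v‖)
    {A : Matrix (Fin n) (Fin n) ℝ} (hAnn : ∀ i j, 0 ≤ A i j) (hArow : ∀ i, ∑ j, A i j = 1)
    {ε B : ℝ} (hε : 0 ≤ ε) {α : ℕ → ℝ} (hα : ∀ k, 0 ≤ α k) {x y d gv : ℕ → Fin n → E}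
    (hdB : ∀ k i, ‖d k i‖ ≤ B) (hx0 : ∀ i, x 0 i = 0)
    (hxupd : ∀ k i, x (k + 1) i = P (∑ j, A i j • x k j + ε • y k i - α k • d k i))
    (hgv : ∀ k i, gv k i = x (k + 1) i - ∑ j, A i j • x k j - ε • y k i) (k : ℕ) (i : Fin n) :
    ∃ e, gv k i = e - α k • d k i ∧ (∀ w ∈ X, ⟪e, x (k + 1) i - w⟫ ≤ 0)
      ∧ ‖e‖ ≤ ε * ‖y k i‖ + B * α k := by
  have hxX : ∀ k j, x k j ∈ X := by rintro (_ | k) j <;> simp [hx0, hX0, hxupd, hPmem]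
  have hq : ∑ j, A i j • x k j ∈ X :=
    hX.sum_mem (fun j _ => hAnn i j) (hArow i) fun j _ => hxX k j
  obtain ⟨e, hPe, he, hen⟩ := exists_proj_add_eq_add hX hPmem hPproj hq (ε • y k i - α k • d k i)
  rw [← add_sub_assoc] at hPe he
  refine ⟨e, by rw [hgv, hxupd, hPe]; abel, by rwa [hxupd], hen.trans ((norm_sub_le _ _).trans ?_)⟩
  rw [norm_smul, norm_smul, Real.norm_of_nonneg hε, Real.norm_of_nonneg (hα k)]
  linarith [mul_le_mul_of_nonneg_left (hdB k i) (hα k)]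

theorem ddps_g_succ_le {ε B γ : ℝ} (hε : 0 ≤ ε) {α : ℕ → ℝ} (hα : ∀ k, 0 ≤ α k)
    {y d e gv : ℕ → Fin n → E} {g Q : ℕ → ℝ} (hdB : ∀ k i, ‖d k i‖ ≤ B)
    (hg : ∀ k, g k = ∑ i, ‖gv k i‖) (hgve : ∀ k i, gv k i = e k i - α k • d k i)
    (hen : ∀ k i, ‖e k i‖ ≤ ε * ‖y k i‖ + B * α k) (hy : ∀ k i, ‖y (k + 1) i‖ ≤ γ * Q k)
    (k : ℕ) : g (k + 1) ≤ ε * n * γ * Q k + 2 * n * B * α (k + 1) := by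
  have hi (i : Fin n) : ‖gv (k + 1) i‖ ≤ ε * (γ * Q k) + 2 * B * α (k + 1) := by
    rw [hgve]
    refine (norm_sub_le _ _).trans ?_
    rw [norm_smul, Real.norm_of_nonneg (hα _)]
    linarith [mul_le_mul_of_nonneg_left (hdB (k + 1) i) (hα (k + 1)), hen (k + 1) i,
      mul_le_mul_of_nonneg_left (hy k i) hε]
  rw [hg]
  refine (sum_le_sum fun i _ => hi i).trans_eq ?_
  simp only [sum_const, card_univ, Fintype.card_fin, nsmul_eq_mul]
  ring

theorem ddps_descent_step [FiniteDimensional ℝ E] {f : Fin n → E → ℝ} {B ε fstar : ℝ}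
    {α : ℕ → ℝ} {x y d e gv : ℕ → Fin n → E} {zbar : ℕ → E} {g Q : ℕ → ℝ} {xs : E} (hn : 1 ≤ n)
    (hconv : ∀ i, ConvexOn ℝ Set.univ (f i))
    (hsubB : ∀ (i : Fin n) (u s : E), (∀ v, f i u + ⟪s, v - u⟫ ≤ f i v) → ‖s‖ ≤ B)
    (hd : ∀ k i v, f i (x k i) + ⟪d k i, v - x k i⟫ ≤ f i v) (hε : 0 ≤ ε) (hα : ∀ k, 0 ≤ α k)
    (hg : ∀ k, g k = ∑ i, ‖gv k i‖)
    (hzsucc : ∀ k, zbar (k + 1) = zbar k + (n : ℝ)⁻¹ • ∑ i, gv k i)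
    (hgve : ∀ k i, gv k i = e k i - α k • d k i) (he : ∀ k i, ⟪e k i, x (k + 1) i - xs⟫ ≤ 0)
    (hen : ∀ k i, ‖e k i‖ ≤ ε * ‖y k i‖ + B * α k) (hcons : ∀ k i, ‖x k i - zbar k‖ ≤ Q k)
    (hy : ∀ k i, ‖y k i‖ ≤ Q k) (hxs : ∑ i, f i xs = fstar) (k : ℕ) :
    2 * (n : ℝ)⁻¹ * (α k * (∑ i, f i (zbar k) - fstar))
      ≤ ‖zbar k - xs‖ ^ 2 - ‖zbar (k + 1) - xs‖ ^ 2 + descentRemainder ε B Q g α k := by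
  have hn0 : (0 : ℝ) < n := by exact_mod_cast hn
  have hzdiff : ‖zbar (k + 1) - zbar k‖ ≤ g k := by
    rw [hzsucc, add_sub_cancel_left, norm_smul, Real.norm_of_nonneg (by positivity), hg]
    exact (mul_le_of_le_one_left (norm_nonneg _)
      (inv_le_one_of_one_le₀ (by exact_mod_cast hn))).trans (norm_sum_le _ _)
  have hlip (i : Fin n) : f i (zbar k) ≤ f i (x k i) + B * ‖zbar k - x k i‖ := by
    obtain ⟨s, hs⟩ := (hconv i).exists_subgradient
      (continuousOn_univ.1 ((hconv i).continuousOn isOpen_univ)) (zbar k)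
    exact le_add_mul_norm_sub_of_subgradient hs (hsubB i _ _ hs) _
  have hnext (i : Fin n) : ‖zbar k - x (k + 1) i‖ ≤ Q (k + 1) + g k := by
    have := norm_sub_le_norm_sub_add_norm_sub (zbar k) (zbar (k + 1)) (x (k + 1) i)
    rw [norm_sub_rev (zbar k) (zbar (k + 1)), norm_sub_rev (zbar (k + 1)) (x (k + 1) i)] at this
    linarith [hcons (k + 1) i]
  have := averaged_step_descent (φ := f) (z := zbar k) (z' := zbar (k + 1)) (xs := xs)
    (e := e k) (x' := x (k + 1)) (a := Q k) (b := Q (k + 1) + g k) (c := ε * Q k + B * α k)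
    (inv_nonneg.2 hn0.le) (hα k) (by rw [hzsucc]; simp_rw [hgve]) (hd k)
    (fun i => hsubB i _ _ (hd k i)) hlip (he k) (fun i => by rw [norm_sub_rev]; exact hcons k i)
    hnext (fun i => (hen k i).trans (by linarith [mul_le_mul_of_nonneg_left (hy k i) hε]))
  rw [sum_sub_distrib, hxs, Fintype.card_fin] at this
  have hsq : ‖zbar (k + 1) - zbar k‖ ^ 2 ≤ g k ^ 2 := pow_le_pow_left₀ (norm_nonneg _) hzdiff 2
  have hcard : 2 * (n : ℝ)⁻¹ * (n * ((Q (k + 1) + g k) * (ε * Q k + B * α k) + 2 * α k * B * Q k))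
      = 2 * ((Q (k + 1) + g k) * (ε * Q k + B * α k) + 2 * B * (α k * Q k)) := by
    field_simp
  rw [descentRemainder]
  linarith

end DDPS

theorem ddps_weighted_objective_sum_finite_general
    {n p : ℕ} (hn : 1 ≤ n)
    (f : Fin n → EuclideanSpace ℝ (Fin p) → ℝ)
    (hconv : ∀ i, ConvexOn ℝ Set.univ (f i))
    (B : ℝ) (hB : 0 < B)
    (hsubB : ∀ (i : Fin n) (u s : EuclideanSpace ℝ (Fin p)),
      (∀ v, f i u + ⟪s, v - u⟫ ≤ f i v) → ‖s‖ ≤ B)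
    (X : Set (EuclideanSpace ℝ (Fin p)))
    (hXcv : Convex ℝ X)
    (hX0 : (0 : EuclideanSpace ℝ (Fin p)) ∈ X)
    (P : EuclideanSpace ℝ (Fin p) → EuclideanSpace ℝ (Fin p))
    (hPmem : ∀ v, P v ∈ X)
    (hPproj : ∀ v w, w ∈ X → ‖P v - v‖ ≤ ‖w - v‖)
    (A Bh : Matrix (Fin n) (Fin n) ℝ)
    (hAnn : ∀ i j, 0 ≤ A i j) (hArow : ∀ i, ∑ j, A i j = 1)
    (hBcol : ∀ j, ∑ i, Bh i j = 1)
    (ε : ℝ) (hε : 0 < ε)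
    (α : ℕ → ℝ) (hαnn : ∀ k, 0 ≤ α k)
    (x y d : ℕ → Fin n → EuclideanSpace ℝ (Fin p))
    (hx0 : ∀ i, x 0 i = 0) (hy0 : ∀ i, y 0 i = 0)
    (hd : ∀ k i v, f i (x k i) + ⟪d k i, v - x k i⟫ ≤ f i v)
    (hxupd : ∀ k i, x (k + 1) i = P (∑ j, A i j • x k j + ε • y k i - α k • d k i))
    (hyupd : ∀ k i, y (k + 1) i =
      x k i - ∑ j, A i j • x k j + (∑ j, Bh i j • y k j) - ε • y k i)
    (gv : ℕ → Fin n → EuclideanSpace ℝ (Fin p))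
    (hgv : ∀ k i, gv k i = x (k + 1) i - ∑ j, A i j • x k j - ε • y k i)
    (g : ℕ → ℝ) (hg : ∀ k, g k = ∑ i, ‖gv k i‖)
    (zbar : ℕ → EuclideanSpace ℝ (Fin p))
    (hzbar : ∀ k, zbar k = (n : ℝ)⁻¹ • (∑ i, x k i + ∑ i, y k i))
    (Γ γ : ℝ) (hΓ : 0 < Γ) (hγ0 : 0 < γ) (hγ1 : γ < 1)
    (hM : ∀ (k : ℕ) (i : Fin n ⊕ Fin n),
      ∑ j, |((Matrix.fromBlocks A (ε • (1 : Matrix (Fin n) (Fin n) ℝ))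
          ((1 : Matrix (Fin n) (Fin n) ℝ) - A) (Bh - ε • (1 : Matrix (Fin n) (Fin n) ℝ))) ^ k
        - Matrix.fromBlocks (Matrix.of fun _ _ => (n : ℝ)⁻¹)
            (Matrix.of fun _ _ => (n : ℝ)⁻¹) 0 0 :
          Matrix (Fin n ⊕ Fin n) (Fin n ⊕ Fin n) ℝ) i j| ≤ Γ * γ ^ k)
    (fstar : ℝ)
    (hXstar : ∃ xs ∈ X, ∑ i, f i xs = fstar)
    (hεsmall : ε < (1 - γ) / (2 * n * Γ * γ))
    (hα2 : Summable fun k => (α k) ^ 2)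
    :
    ∃ S : ℝ, ∀ K : ℕ,
      ∑ k ∈ Finset.range (K + 1), α k * ((∑ i, f i (zbar k)) - fstar) ≤ S := by
  obtain ⟨xs, hxsX, hxsf⟩ := hXstar
  set Q := consensusBound Γ γ g
  have hg0 (k : ℕ) : 0 ≤ g k := (hg k).symm ▸ sum_nonneg fun i _ => norm_nonneg _
  have hQ0 : ∀ k, 0 ≤ Q k := consensusBound_nonneg hΓ.le hγ0.le hg0
  have hQsucc : ∀ k, Q (k + 1) = γ * Q k + Γ * g k := consensusBound_succ Γ γ g
  have hcons : ∀ k i, ‖x k i - zbar k‖ ≤ Q k ∧ ‖y (k + 1) i‖ ≤ γ * Q k :=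
    ddps_consensus hx0 hy0 hgv hyupd hBcol hg hzbar hM
  have hy : ∀ k i, ‖y k i‖ ≤ Q k := by
    rintro (_ | k) i
    · simpa [hy0] using hQ0 0
    · linarith [(hcons k i).2, hQsucc k, mul_nonneg hΓ.le (hg0 k)]
  have hdB (k : ℕ) (i : Fin n) : ‖d k i‖ ≤ B := hsubB i _ _ (hd k i)
  choose e hgve he hen using
    ddps_exists_proj_error hXcv hX0 hPmem hPproj hAnn hArow hε.le hαnn hdB hx0 hxupd hgv
  obtain ⟨hQ2, hg2⟩ := summable_sq_of_coupled (w := fun k => 2 * n * B * α k) hQ0 hg0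
    (fun k => by have := hαnn k; positivity) hγ0.le hγ1 hΓ.le (by positivity)
    (by rw [lt_div_iff₀ (by positivity)] at hεsmall; linarith) (fun k => (hQsucc k).le)
    (ddps_g_succ_le hε.le hαnn hdB hg hgve hen fun k i => (hcons k i).2)
    ((hα2.mul_left ((2 * n * B) ^ 2)).congr fun k => by ring)
  have hdesc := ddps_descent_step hn hconv hsubB hd hε.le hαnn hg
    (ddps_zbar_succ hx0 hy0 hgv hyupd hBcol hzbar) hgve (fun k i => he k i xs hxsX) hen
    (fun k i => (hcons k i).1) hy hxsf
  refine ⟨n / 2 * (‖zbar 0 - xs‖ ^ 2 + ∑' k, descentRemainder ε B Q g α k), fun K => ?_⟩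
  have hsum := sum_range_le_of_le_sub_add (fun k => sq_nonneg _)
    (descentRemainder_nonneg hε.le hB.le hQ0 hg0 hαnn)
    (summable_descentRemainder hε.le hB.le hQ0 hg0 hαnn hQ2 hg2 hα2) hdesc (K + 1)
  rw [← mul_sum] at hsum
  calc ∑ k ∈ range (K + 1), α k * (∑ i, f i (zbar k) - fstar)
      = n / 2 * (2 * (n : ℝ)⁻¹ * ∑ k ∈ range (K + 1), α k * (∑ i, f i (zbar k) - fstar)) := by
        field_simp
    _ ≤ _ := by gcongr

theorem ddps_weighted_objective_sum_finite
    {n p : ℕ} (hn : 1 ≤ n) (hp : 1 ≤ p)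
    (f : Fin n → EuclideanSpace ℝ (Fin p) → ℝ)
    (hconv : ∀ i, ConvexOn ℝ Set.univ (f i))
    (B : ℝ) (hB : 0 < B)
    (hsubB : ∀ (i : Fin n) (u s : EuclideanSpace ℝ (Fin p)),
      (∀ v, f i u + ⟪s, v - u⟫ ≤ f i v) → ‖s‖ ≤ B)
    (X : Set (EuclideanSpace ℝ (Fin p)))
    (hXne : X.Nonempty) (hXcl : IsClosed X) (hXcv : Convex ℝ X)
    (hX0 : (0 : EuclideanSpace ℝ (Fin p)) ∈ X)
    (P : EuclideanSpace ℝ (Fin p) → EuclideanSpace ℝ (Fin p))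
    (hPmem : ∀ v, P v ∈ X)
    (hPproj : ∀ v w, w ∈ X → ‖P v - v‖ ≤ ‖w - v‖)
    (A Bh : Matrix (Fin n) (Fin n) ℝ)
    (hAnn : ∀ i j, 0 ≤ A i j) (hArow : ∀ i, ∑ j, A i j = 1)
    (hBnn : ∀ i j, 0 ≤ Bh i j) (hBcol : ∀ j, ∑ i, Bh i j = 1)
    (ε : ℝ) (hε : 0 < ε)
    (α : ℕ → ℝ) (hαnn : ∀ k, 0 ≤ α k) (hαdec : ∀ k, α (k + 1) ≤ α k)
    (x y d : ℕ → Fin n → EuclideanSpace ℝ (Fin p))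
    (hx0 : ∀ i, x 0 i = 0) (hy0 : ∀ i, y 0 i = 0)
    (hd : ∀ k i v, f i (x k i) + ⟪d k i, v - x k i⟫ ≤ f i v)
    (hxupd : ∀ k i, x (k + 1) i = P (∑ j, A i j • x k j + ε • y k i - α k • d k i))
    (hyupd : ∀ k i, y (k + 1) i =
      x k i - ∑ j, A i j • x k j + (∑ j, Bh i j • y k j) - ε • y k i)
    (gv : ℕ → Fin n → EuclideanSpace ℝ (Fin p))
    (hgv : ∀ k i, gv k i = x (k + 1) i - ∑ j, A i j • x k j - ε • y k i)
    (g : ℕ → ℝ) (hg : ∀ k, g k = ∑ i, ‖gv k i‖)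
    (zbar : ℕ → EuclideanSpace ℝ (Fin p))
    (hzbar : ∀ k, zbar k = (n : ℝ)⁻¹ • (∑ i, x k i + ∑ i, y k i))
    (Γ γ : ℝ) (hΓ : 0 < Γ) (hγ0 : 0 < γ) (hγ1 : γ < 1)
    (hM : ∀ (k : ℕ) (i : Fin n ⊕ Fin n),
      ∑ j, |((Matrix.fromBlocks A (ε • (1 : Matrix (Fin n) (Fin n) ℝ))
          ((1 : Matrix (Fin n) (Fin n) ℝ) - A) (Bh - ε • (1 : Matrix (Fin n) (Fin n) ℝ))) ^ k
        - Matrix.fromBlocks (Matrix.of fun _ _ => (n : ℝ)⁻¹)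
            (Matrix.of fun _ _ => (n : ℝ)⁻¹) 0 0 :
          Matrix (Fin n ⊕ Fin n) (Fin n ⊕ Fin n) ℝ) i j| ≤ Γ * γ ^ k)
    (fstar : ℝ) (hfstar : IsGLB ((fun v => ∑ i, f i v) '' X) fstar)
    (hXstar : ∃ xs ∈ X, ∑ i, f i xs = fstar)
    (hεsmall : ε < (1 - γ) / (2 * n * Γ * γ))
    (hαdiv : Tendsto (fun K => ∑ k ∈ Finset.range K, α k) atTop atTop)
    (hα2 : Summable fun k => (α k) ^ 2)
    :
    ∃ S : ℝ, ∀ K : ℕ,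
      ∑ k ∈ Finset.range (K + 1), α k * ((∑ i, f i (zbar k)) - fstar) ≤ S :=
  ddps_weighted_objective_sum_finite_general hn f hconv B hB hsubB X hXcv hX0 P hPmem hPproj A Bh
    hAnn hArow hBcol ε hε α hαnn x y d hx0 hy0 hd hxupd hyupd gv hgv g hg zbar hzbar Γ γ hΓ hγ0 hγ1
    hM fstar hXstar hεsmall hα2
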